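/- arXiv:2105.03764 — 2 statements merged into one kernel-verified Lean document; each statement's English description precedes it below -/
import Mathlib

section
/- Let X be a countable discrete metric space. If the uniform Roe algebra C*_u(X) is monotone complete, then X is bounded. -/
noncomputable section

/-- `ℓ²(X)`. -/
abbrev H (X : Type) := lp (fun _ : X => ℂ) 2

/-- The delta function `δ_x`. -/
def delta {X : Type} (x : X) : H X :=
  letI := Classical.decEq X
  lp.single 2 x 1

/-- Matrix entry `⟨δ_y, T δ_x⟩` of an operator. -/
def entry {X Y : Type} (T : H X →L[ℂ] H Y) (y : Y) (x : X) : ℂ := (T (delta x)) y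

/-- The uniform Roe algebra `C*_u(X)`. -/
def RoeSet (X : Type) [MetricSpace X] : Set (H X →L[ℂ] H X) :=
  closure {T | ∃ L : ℝ, ∀ x y : X, L ≤ dist x y → entry T y x = 0}

/-- The Loewner order on operators: `A ≤ B` iff `B - A` is positive. -/
def opLE {X : Type} (A B : H X →L[ℂ] H X) : Prop := (B - A).IsPositive

/-- Monotone completeness of `C*_u(X)`: every nonempty norm-bounded upward-directed
(increasing) set of self-adjoint elements of `C*_u(X)` has a least upper bound in
`C*_u(X)` with respect to the Loewner order. -/
def MonotoneComplete (X : Type) [MetricSpace X] : Prop :=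
  ∀ S : Set (H X →L[ℂ] H X), S.Nonempty → S ⊆ RoeSet X →
    (∀ a ∈ S, IsSelfAdjoint a) →
    (∀ a ∈ S, ∀ b ∈ S, ∃ c ∈ S, opLE a c ∧ opLE b c) →
    (∃ C : ℝ, ∀ a ∈ S, ‖a‖ ≤ C) →
    ∃ u ∈ RoeSet X, (∀ a ∈ S, opLE a u) ∧
      ∀ v ∈ RoeSet X, IsSelfAdjoint v → (∀ a ∈ S, opLE a v) → opLE u v

/-!
If `X` is unbounded, choose pairwise distinct points `aₙ, bₙ` with `d(aₙ, bₙ) ≥ n` and put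
`vₙ = δ_{aₙ} + δ_{bₙ}`, `wₙ = δ_{aₙ} - δ_{bₙ}`. The finite-propagation operators
`S_s = ∑_{n ∈ s} |vₙ⟩⟨vₙ|` increase with `s`, and each is dominated by every finite-propagation
operator `2 - ∑_{n ∈ t} |wₙ⟩⟨wₙ|`, because `|v⟩⟨v| + |w⟩⟨w| = 2 (|δ_a⟩⟨δ_a| + |δ_b⟩⟨δ_b|)` and
`∑ |δ_x⟩⟨δ_x| ≤ 1` (Bessel). A least upper bound `u` in `C*_u(X)` satisfies
`S_{{n}} ≤ u ≤ 2` and `0 ≤ u ≤ 2 - |wₙ⟩⟨wₙ|`; the two bounds of each pair agree on `vₙ`, resp.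
`wₙ`, which forces `u vₙ = 2 vₙ` and `u wₙ = 0`, i.e. `u δ_{aₙ} = vₙ`. Then
`⟨δ_{bₙ}, u δ_{aₙ}⟩ = 1` for all `n`, which no norm limit of finite-propagation operators allows.
-/

open ContinuousLinearMap InnerProductSpace Bornology Metric
open scoped InnerProductSpace ComplexOrder

section Loewner

variable {E : Type*} [NormedAddCommGroup E] [InnerProductSpace ℂ E]

theorem Orthonormal.sum_rankOne_le_one {ι : Type*} {e : ι → E} (he : Orthonormal ℂ e)
    (s : Finset ι) : ∑ i ∈ s, rankOne ℂ (e i) (e i) ≤ 1 := by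
  have hsymm : (∑ i ∈ s, rankOne ℂ (e i) (e i)).IsSymmetric :=
    (isPositive_sum s fun i _ => isPositive_rankOne_self (e i)).isSymmetric
  refine ⟨isPositive_one.isSymmetric.sub hsymm, fun x => ?_⟩
  have hbessel := he.sum_inner_products_le x (s := s)
  simp only [reApplyInnerSelf_apply, sub_apply, one_apply_eq_self, sum_apply, rankOne_apply,
    inner_sub_left, sum_inner, inner_smul_left, RCLike.conj_mul, inner_self_eq_norm_sq_to_K,
    map_sub, map_sum, ← RCLike.ofReal_pow, RCLike.ofReal_re]
  linarith

theorem sum_rankOne_self_mono {ι : Type*} (f : ι → E) {s t : Finset ι} (h : s ⊆ t) :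
    ∑ i ∈ s, rankOne ℂ (f i) (f i) ≤ ∑ i ∈ t, rankOne ℂ (f i) (f i) := by
  classical
  rw [le_def, ← Finset.sum_sdiff_eq_sub h]
  exact isPositive_sum _ fun i _ => isPositive_rankOne_self (f i)

variable [CompleteSpace E]

theorem ContinuousLinearMap.apply_eq_zero_of_nonneg_of_inner_eq_zero {T : E →L[ℂ] E} (hT : 0 ≤ T)
    {x : E} (hx : ⟪T x, x⟫_ℂ = 0) : T x = 0 := by
  obtain ⟨b, rfl⟩ := CStarAlgebra.nonneg_iff_eq_star_mul_self.mp hT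
  have hbx : b x = 0 := by
    rwa [mul_apply_eq_comp, star_eq_adjoint, adjoint_inner_left, inner_self_eq_zero] at hx
  simp [hbx]

theorem ContinuousLinearMap.apply_eq_of_le_of_le {A T B : E →L[ℂ] E} (hAT : A ≤ T) (hTB : T ≤ B)
    {x : E} (hx : A x = B x) : T x = A x := by
  have hsum : ⟪(T - A) x, x⟫_ℂ + ⟪(B - T) x, x⟫_ℂ = 0 := by simp [hx]
  have h0 := (add_eq_zero_iff_of_nonneg (hAT.inner_nonneg_left x) (hTB.inner_nonneg_left x)).mp
    hsum |>.1
  exact sub_eq_zero.mp (apply_eq_zero_of_nonneg_of_inner_eq_zero (sub_nonneg.mpr hAT) h0)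

end Loewner

section Pairs

variable {E α : Type*} [NormedAddCommGroup E] [InnerProductSpace ℂ E]

def pairSum (e : α ⊕ α → E) (n : α) : E := e (.inl n) + e (.inr n)

def pairDiff (e : α ⊕ α → E) (n : α) : E := e (.inl n) - e (.inr n)

def pairSumOp (e : α ⊕ α → E) (s : Finset α) : E →L[ℂ] E :=
  ∑ n ∈ s, rankOne ℂ (pairSum e n) (pairSum e n)

def pairDiffOp (e : α ⊕ α → E) (s : Finset α) : E →L[ℂ] E :=
  ∑ n ∈ s, rankOne ℂ (pairDiff e n) (pairDiff e n)

theorem rankOne_add_self_add_rankOne_sub_self (x y : E) :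
    rankOne ℂ (x + y) (x + y) + rankOne ℂ (x - y) (x - y) =
      (2 : ℂ) • (rankOne ℂ x x + rankOne ℂ y y) := by
  simp only [map_add, map_sub, add_apply, sub_apply]
  module

theorem pairSumOp_add_pairDiffOp (e : α ⊕ α → E) (s : Finset α) :
    pairSumOp e s + pairDiffOp e s = (2 : ℂ) • ∑ i ∈ s.disjSum s, rankOne ℂ (e i) (e i) := by
  simp only [pairSumOp, pairDiffOp, pairSum, pairDiff, ← Finset.sum_add_distrib,
    rankOne_add_self_add_rankOne_sub_self, Finset.sum_disjSum, Finset.smul_sum]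

variable {e : α ⊕ α → E}

theorem pairSumOp_monotone : Monotone (pairSumOp e) := fun _ _ h => sum_rankOne_self_mono _ h

theorem pairDiffOp_monotone : Monotone (pairDiffOp e) := fun _ _ h => sum_rankOne_self_mono _ h

theorem pairSumOp_nonneg (s : Finset α) : 0 ≤ pairSumOp e s := by
  simpa [pairSumOp] using pairSumOp_monotone (e := e) (Finset.empty_subset s)

theorem pairSumOp_add_pairDiffOp_le (he : Orthonormal ℂ e) (s : Finset α) :
    pairSumOp e s + pairDiffOp e s ≤ (2 : ℂ) • 1 := by
  rw [pairSumOp_add_pairDiffOp, le_def, ← smul_sub]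
  exact (he.sum_rankOne_le_one _).smul_of_nonneg (by norm_num)

theorem pairSumOp_le_sub_pairDiffOp [CompleteSpace E] (he : Orthonormal ℂ e) (s t : Finset α) :
    pairSumOp e s ≤ (2 : ℂ) • 1 - pairDiffOp e t := by
  classical
  calc pairSumOp e s ≤ pairSumOp e (s ∪ t) := pairSumOp_monotone Finset.subset_union_left
    _ ≤ (2 : ℂ) • 1 - pairDiffOp e (s ∪ t) :=
      le_sub_iff_add_le.mpr (pairSumOp_add_pairDiffOp_le he _)
    _ ≤ (2 : ℂ) • 1 - pairDiffOp e t :=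
      sub_le_sub_left (pairDiffOp_monotone Finset.subset_union_right) _

theorem norm_pairSumOp_le [CompleteSpace E] (he : Orthonormal ℂ e) (s : Finset α) :
    ‖pairSumOp e s‖ ≤ ‖(2 : ℂ) • (1 : E →L[ℂ] E)‖ :=
  CStarAlgebra.norm_le_norm_of_nonneg_of_le (pairSumOp_nonneg s)
    (by simpa [pairDiffOp] using pairSumOp_le_sub_pairDiffOp he s ∅)

theorem inner_pairSum_pairSum [DecidableEq α] (he : Orthonormal ℂ e) (m n : α) :
    ⟪pairSum e m, pairSum e n⟫_ℂ = if m = n then 2 else 0 := by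
  simp [pairSum, orthonormal_iff_ite.mp he]
  split_ifs <;> norm_num

theorem inner_pairDiff_pairDiff [DecidableEq α] (he : Orthonormal ℂ e) (m n : α) :
    ⟪pairDiff e m, pairDiff e n⟫_ℂ = if m = n then 2 else 0 := by
  simp [pairDiff, orthonormal_iff_ite.mp he]
  split_ifs <;> norm_num

theorem pairSumOp_apply_pairSum (he : Orthonormal ℂ e) {s : Finset α} {n : α} (hn : n ∈ s) :
    pairSumOp e s (pairSum e n) = (2 : ℂ) • pairSum e n := by
  classical
  simp [pairSumOp, sum_apply, inner_pairSum_pairSum he, hn]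

theorem pairDiffOp_apply_pairDiff (he : Orthonormal ℂ e) {s : Finset α} {n : α} (hn : n ∈ s) :
    pairDiffOp e s (pairDiff e n) = (2 : ℂ) • pairDiff e n := by
  classical
  simp [pairDiffOp, sum_apply, inner_pairDiff_pairDiff he, hn]

theorem apply_inl_eq_pairSum_of_le_of_le [CompleteSpace E] (he : Orthonormal ℂ e)
    {u : E →L[ℂ] E} (hlow : ∀ s, pairSumOp e s ≤ u) (hup : ∀ t, u ≤ (2 : ℂ) • 1 - pairDiffOp e t)
    (n : α) : u (e (.inl n)) = pairSum e n := by
  have hsum : u (pairSum e n) = (2 : ℂ) • pairSum e n := by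
    rw [apply_eq_of_le_of_le (hlow {n}) (hup ∅)] <;>
      simp [pairSumOp_apply_pairSum he (Finset.mem_singleton_self n), pairDiffOp]
  have hdiff : u (pairDiff e n) = 0 := by
    rw [apply_eq_of_le_of_le (hlow ∅) (hup {n})]
    · simp [pairSumOp]
    · simp [pairSumOp, pairDiffOp_apply_pairDiff he (Finset.mem_singleton_self n)]
  have htwo : (2 : ℂ) • e (.inl n) = pairSum e n + pairDiff e n := by
    simp only [pairSum, pairDiff]; module
  apply smul_right_injective E (two_ne_zero (α := ℂ))
  simp only [← map_smul, htwo, map_add, hsum, hdiff, add_zero]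

end Pairs

section UniformRoe

variable {X : Type}

theorem inner_delta_left (x : X) (f : H X) : ⟪delta x, f⟫_ℂ = f x := by
  let := Classical.decEq X
  simp [delta, lp.inner_single_left]

theorem delta_apply_self (x : X) : (delta x : H X) x = 1 := by
  let := Classical.decEq X
  exact lp.single_apply_self 2 x 1

theorem delta_apply_of_ne {x y : X} (h : y ≠ x) : (delta x : H X) y = 0 := by
  let := Classical.decEq X
  exact lp.single_apply_ne 2 x 1 h

theorem orthonormal_delta : Orthonormal ℂ (delta : X → H X) := by
  classical
  refine orthonormal_iff_ite.mpr fun x y => ?_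
  rw [inner_delta_left]
  split_ifs with h
  · rw [h, delta_apply_self]
  · exact delta_apply_of_ne h

theorem entry_sub (A B : H X →L[ℂ] H X) (y x : X) :
    entry (A - B) y x = entry A y x - entry B y x := rfl

theorem norm_entry_le (T : H X →L[ℂ] H X) (y x : X) : ‖entry T y x‖ ≤ ‖T‖ :=
  calc ‖entry T y x‖ ≤ ‖T (delta x)‖ := lp.norm_apply_le_norm two_ne_zero _ y
    _ ≤ ‖T‖ * ‖(delta x : H X)‖ := T.le_opNorm _
    _ = ‖T‖ := by rw [orthonormal_delta.1 x, mul_one]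

theorem pairSum_delta_apply_of_notMem {α : Type*} {p : α ⊕ α → X} {n : α} {y : X}
    (hy : y ∉ ({p (.inl n), p (.inr n)} : Set X)) : pairSum (delta ∘ p) n y = 0 := by
  simp only [Set.mem_insert_iff, Set.mem_singleton_iff, not_or] at hy
  simp [pairSum, delta_apply_of_ne hy.1, delta_apply_of_ne hy.2]

theorem pairDiff_delta_apply_of_notMem {α : Type*} {p : α ⊕ α → X} {n : α} {y : X}
    (hy : y ∉ ({p (.inl n), p (.inr n)} : Set X)) : pairDiff (delta ∘ p) n y = 0 := by
  simp only [Set.mem_insert_iff, Set.mem_singleton_iff, not_or] at hy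
  simp [pairDiff, delta_apply_of_ne hy.1, delta_apply_of_ne hy.2]

variable [MetricSpace X]

variable (X) in
def finitePropagation : Submodule ℂ (H X →L[ℂ] H X) where
  carrier := {T | ∃ L : ℝ, ∀ x y : X, L ≤ dist x y → entry T y x = 0}
  zero_mem' := ⟨0, fun _ _ _ => rfl⟩
  add_mem' := by
    rintro A B ⟨L, hA⟩ ⟨M, hB⟩
    refine ⟨max L M, fun x y h => ?_⟩
    change entry A y x + entry B y x = 0
    rw [hA x y (le_of_max_le_left h), hB x y (le_of_max_le_right h), add_zero]
  smul_mem' := by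
    rintro c A ⟨L, hA⟩
    refine ⟨L, fun x y h => ?_⟩
    change c * entry A y x = 0
    rw [hA x y h, mul_zero]

theorem finitePropagation_subset_roeSet : (finitePropagation X : Set (H X →L[ℂ] H X)) ⊆ RoeSet X :=
  subset_closure

theorem one_mem_finitePropagation : 1 ∈ finitePropagation X :=
  ⟨1, fun x y h => delta_apply_of_ne fun hyx => by norm_num [hyx] at h⟩

theorem rankOne_mem_finitePropagation {v w : H X} {s : Set X} (hs : IsBounded s)
    (hv : ∀ y ∉ s, v y = 0) (hw : ∀ x ∉ s, w x = 0) : rankOne ℂ v w ∈ finitePropagation X := by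
  refine ⟨diam s + 1, fun x y h => ?_⟩
  have hout : x ∉ s ∨ y ∉ s := by
    by_contra! hxy
    linarith [dist_le_diam_of_mem hs hxy.1 hxy.2]
  change ⟪w, delta x⟫_ℂ * v y = 0
  rcases hout with hx | hy
  · rw [← inner_conj_symm, inner_delta_left, hw x hx, map_zero, zero_mul]
  · rw [hv y hy, mul_zero]

theorem exists_norm_entry_lt {T : H X →L[ℂ] H X} (hT : T ∈ RoeSet X) {ε : ℝ} (hε : 0 < ε) :
    ∃ L : ℝ, ∀ x y : X, L ≤ dist x y → ‖entry T y x‖ < ε := by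
  obtain ⟨S, ⟨L, hL⟩, hTS⟩ := Metric.mem_closure_iff.mp hT ε hε
  refine ⟨L, fun x y h => ?_⟩
  calc ‖entry T y x‖ = ‖entry (T - S) y x‖ := by rw [entry_sub, hL x y h, sub_zero]
    _ ≤ ‖T - S‖ := norm_entry_le _ _ _
    _ < ε := by rwa [← dist_eq_norm]

theorem pairSumOp_mem_finitePropagation {α : Type*} (p : α ⊕ α → X) (s : Finset α) :
    pairSumOp (delta ∘ p) s ∈ finitePropagation X :=
  Submodule.sum_mem _ fun _ _ => rankOne_mem_finitePropagation (Set.toFinite _).isBounded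
    (fun _ => pairSum_delta_apply_of_notMem) (fun _ => pairSum_delta_apply_of_notMem)

theorem two_smul_one_sub_pairDiffOp_mem_finitePropagation {α : Type*} (p : α ⊕ α → X)
    (t : Finset α) :
    (2 : ℂ) • 1 - pairDiffOp (delta ∘ p) t ∈ finitePropagation X :=
  sub_mem (Submodule.smul_mem _ _ one_mem_finitePropagation) <|
    Submodule.sum_mem _ fun _ _ => rankOne_mem_finitePropagation (Set.toFinite _).isBounded
      (fun _ => pairDiff_delta_apply_of_notMem) (fun _ => pairDiff_delta_apply_of_notMem)

theorem exists_seq_dist_ge_of_not_isBounded (hX : ¬ IsBounded (Set.univ : Set X)) :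
    ∃ q : ℕ → X, ∀ i j : ℕ, i < j → (i : ℝ) + 1 ≤ dist (q i) (q j) := by
  obtain ⟨x₀⟩ : Nonempty X := by
    by_contra h
    exact hX (by simp [Set.univ_eq_empty_iff.mpr (not_nonempty_iff.mp h)])
  have hfar : ∀ r : ℝ, ∃ y, r < dist x₀ y := by
    by_contra! h
    obtain ⟨r, hr⟩ := h
    refine hX ((isBounded_iff_subset_closedBall x₀).2 ⟨r, fun y _ => ?_⟩)
    simpa [dist_comm] using hr y
  choose f hf using hfar
  let q : ℕ → X := fun n => Nat.rec x₀ (fun k y => f (dist x₀ y + k + 1)) n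
  have hstep : ∀ k : ℕ, dist x₀ (q k) + k + 1 ≤ dist x₀ (q (k + 1)) := fun k => (hf _).le
  have hmono : Monotone fun n => dist x₀ (q n) :=
    monotone_nat_of_le_succ fun k => by linarith [hstep k, k.cast_nonneg (α := ℝ)]
  refine ⟨q, fun i j hij => ?_⟩
  linarith [hstep i, hmono (Nat.succ_le_of_lt hij), dist_triangle x₀ (q i) (q j)]

theorem exists_injective_pairs_dist_ge_of_not_isBounded (hX : ¬ IsBounded (Set.univ : Set X)) :
    ∃ p : ℕ ⊕ ℕ → X, Function.Injective p ∧ ∀ n : ℕ, (n : ℝ) ≤ dist (p (.inl n)) (p (.inr n)) := by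
  obtain ⟨q, hq⟩ := exists_seq_dist_ge_of_not_isBounded hX
  have hne : ∀ i j : ℕ, i < j → q i ≠ q j := fun i j hij heq => by
    have := hq i j hij
    rw [heq, dist_self] at this
    linarith [i.cast_nonneg (α := ℝ)]
  have hinj : Function.Injective q := fun i j heq => by
    rcases lt_trichotomy i j with h | h | h
    exacts [absurd heq (hne i j h), h, absurd heq.symm (hne j i h)]
  refine ⟨q ∘ Equiv.natSumNatEquivNat, hinj.comp Equiv.natSumNatEquivNat.injective, fun n => ?_⟩
  have := hq (2 * n) (2 * n + 1) (by omega)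
  simp only [Function.comp_apply, Equiv.natSumNatEquivNat_apply, Sum.elim_inl, Sum.elim_inr]
  push_cast at this
  linarith [n.cast_nonneg (α := ℝ)]

end UniformRoe

theorem stmt_2_general {X : Type} [MetricSpace X]
    (hmc : MonotoneComplete X) :
    Bornology.IsBounded (Set.univ : Set X) := by
  by_contra hX
  obtain ⟨p, hp, hfar⟩ := exists_injective_pairs_dist_ge_of_not_isBounded hX
  have he : Orthonormal ℂ (delta ∘ p) := orthonormal_delta.comp p hp
  set Q := fun t => (2 : ℂ) • 1 - pairDiffOp (delta ∘ p) t
  have hQ : ∀ t, 0 ≤ Q t := fun t =>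
    (pairSumOp_nonneg ∅).trans (pairSumOp_le_sub_pairDiffOp he ∅ t)
  obtain ⟨u, hu, hlow, hleast⟩ := hmc (Set.range (pairSumOp (delta ∘ p))) (Set.range_nonempty _)
    (Set.range_subset_iff.2 fun s =>
      finitePropagation_subset_roeSet (pairSumOp_mem_finitePropagation p s))
    (Set.forall_mem_range.2 fun s => (pairSumOp_nonneg s).isSelfAdjoint)
    (directedOn_range.2 pairSumOp_monotone.directed_le)
    ⟨_, Set.forall_mem_range.2 (norm_pairSumOp_le he)⟩
  have hup : ∀ t, u ≤ Q t := fun t =>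
    hleast _
      (finitePropagation_subset_roeSet (two_smul_one_sub_pairDiffOp_mem_finitePropagation p t))
      (hQ t).isSelfAdjoint (Set.forall_mem_range.2 fun s => pairSumOp_le_sub_pairDiffOp he s t)
  have hentry : ∀ n, entry u (p (.inr n)) (p (.inl n)) = 1 := fun n => by
    have hun := apply_inl_eq_pairSum_of_le_of_le he (Set.forall_mem_range.1 hlow) hup n
    simp only [pairSum, Function.comp_apply] at hun
    simp [entry, hun, delta_apply_self, delta_apply_of_ne (hp.ne Sum.inr_ne_inl)]
  obtain ⟨L, hL⟩ := exists_norm_entry_lt hu one_pos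
  obtain ⟨n, hn⟩ := exists_nat_ge L
  simpa [hentry n] using hL _ _ (hn.trans (hfar n))

/-- if the uniform Roe algebra of a countable discrete metric space `X` is
monotone complete, then `X` is bounded. -/
theorem stmt_2 {X : Type} [MetricSpace X] [Countable X]
    (hmc : MonotoneComplete X) :
    Bornology.IsBounded (Set.univ : Set X) :=
  stmt_2_general hmc
end
end

section
/- Let A ⊆ X and d^A the metric on X₀ ⊔ X₁ with d^A(x₀,y₁) = inf_{z∈A}[d_X(x,z)+d_X(z,y)+1]. If T ∈ B(ℓ²(X)) is supported on the k-neighborhood N_k(A) and has d_X-propagation ≤ L, then T, viewed as an operator ℓ²(X₀) → ℓ²(X₁), has d^A-propagation at most L + 2k + 3. -/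
noncomputable section

/-- `d` is a metric on `Z`. -/
structure IsMetric {Z : Type} (d : Z → Z → ℝ) : Prop where
  self : ∀ p, d p p = 0
  eq_of : ∀ p q, d p q = 0 → p = q
  symm : ∀ p q, d p q = d q p
  triangle : ∀ p q r, d p r ≤ d p q + d q r

/-- The cross part of the metric `d^A`:
`d^A(x₀, y₁) = inf_{z ∈ A} (d_X(x,z) + d_X(z,y) + 1)`. -/
def crossA {X : Type} [MetricSpace X] (A : Set X) (x y : X) : ℝ :=
  ⨅ z : A, (dist x (z : X) + dist (z : X) y + 1)

/-- The metric `d^A` on the disjoint union `X₀ ⊔ X₁` of two copies of `X`. -/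
def dA {X : Type} [MetricSpace X] (A : Set X) : X ⊕ X → X ⊕ X → ℝ
  | .inl x, .inl y => dist x y
  | .inr x, .inr y => dist x y
  | .inl x, .inr y => crossA A x y
  | .inr x, .inl y => crossA A y x

/-- The `k`-neighborhood `N_k(A) = {x : d_X(x, A) ≤ k}`. -/
def nbhd {X : Type} [MetricSpace X] (A : Set X) (k : ℝ) : Set X :=
  {x : X | Metric.infDist x A ≤ k}

/-- if `T` is supported on the `k`-neighborhood `N_k(A)` and has
`d_X`-propagation at most `L`, then as an operator between the two copies of `X` it has
`d^A`-propagation at most `L + 2k + 3`. -/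
theorem stmt_14 {X : Type} [MetricSpace X] (A : Set X) (hA : A.Nonempty)
    (k L : ℝ) (T : H X →L[ℂ] H X)
    (hsupp : ∀ x y : X, entry T x y ≠ 0 → x ∈ nbhd A k ∧ y ∈ nbhd A k)
    (hprop : ∀ x y : X, L ≤ dist x y → entry T x y = 0) :
    ∀ x y : X, L + 2 * k + 3 ≤ dA A (Sum.inl x) (Sum.inr y) → entry T x y = 0 := by
  intro x y hle
  by_contra hne
  obtain ⟨hx, _⟩ := hsupp x y hne
  have hdxy : dist x y < L := by
    by_contra h
    exact hne (hprop x y (le_of_not_gt h))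
  -- choose u ∈ A with dist x u ≤ k + 1/2
  have hlt : Metric.infDist x A < k + 1/2 := lt_of_le_of_lt hx (by linarith)
  obtain ⟨u, huA, hu⟩ := (Metric.infDist_lt_iff hA).mp hlt
  have hbdd : BddBelow (Set.range fun z : A => dist x (z : X) + dist (z : X) y + 1) := by
    refine ⟨0, ?_⟩
    rintro r ⟨z, rfl⟩
    positivity
  have hcross : crossA A x y ≤ dist x u + dist u y + 1 :=
    ciInf_le hbdd (⟨u, huA⟩ : A)
  have huy : dist u y ≤ dist u x + dist x y := dist_triangle u x y
  have hux : dist u x = dist x u := dist_comm u x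
  have : dA A (Sum.inl x) (Sum.inr y) < L + 2 * k + 3 := by
    show crossA A x y < L + 2 * k + 3
    calc crossA A x y ≤ dist x u + dist u y + 1 := hcross
      _ ≤ dist x u + (dist x u + dist x y) + 1 := by rw [hux] at huy; linarith
      _ < L + 2 * k + 3 := by linarith
  linarith
end
end
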